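/- arXiv:1201.0682 — 3 statements merged into one kernel-verified Lean document; each statement's English description precedes it below -/
import Mathlib

section
/- For every pure eventuality LTL formula μ, every finite word u ∈ Σ* and every infinite word w ∈ Σ^ω: if w ⊨ μ then uw ⊨ μ (pure eventuality formulae define left-append closed languages). -/
/-- Syntax of LTL formulae over atomic propositions `AP`. -/
inductive LTL (AP : Type) : Type
  | tt    : LTL AP
  | atom  : AP → LTL AP
  | not   : LTL AP → LTL AP
  | or    : LTL AP → LTL AP → LTL AP
  | and   : LTL AP → LTL AP → LTL AP
  | next  : LTL AP → LTL AP
  | untl  : LTL AP → LTL AP → LTL AP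

namespace LTL

/-- Derived operator `F` (eventually). -/
def F {AP : Type} (φ : LTL AP) : LTL AP := untl tt φ

/-- Derived operator `G` (always). -/
def G {AP : Type} (φ : LTL AP) : LTL AP := not (F (not φ))

/-- Derived operator `R` (release). -/
def R {AP : Type} (φ ψ : LTL AP) : LTL AP := not (untl (not φ) (not ψ))

end LTL

/-- The `k`-th suffix of an infinite word. -/
def suffix {AP : Type} (w : ℕ → Set AP) (k : ℕ) : ℕ → Set AP :=
  fun i => w (i + k)

/-- Concatenation of a finite word `u` with an infinite word `w`. -/
def cat {AP : Type} (u : List (Set AP)) (w : ℕ → Set AP) : ℕ → Set AP :=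
  fun i => if h : i < u.length then u.get ⟨i, h⟩ else w (i - u.length)

/-- Satisfaction relation `w ⊨ φ` of LTL over infinite words `w : ℕ → Set AP`. -/
def Sat {AP : Type} : LTL AP → (ℕ → Set AP) → Prop
  | .tt, _ => True
  | .atom a, w => a ∈ w 0
  | .not φ, w => ¬ Sat φ w
  | .or φ ψ, w => Sat φ w ∨ Sat ψ w
  | .and φ ψ, w => Sat φ w ∧ Sat ψ w
  | .next φ, w => Sat φ (suffix w 1)
  | .untl φ ψ, w => ∃ i, Sat ψ (suffix w i) ∧ ∀ j < i, Sat φ (suffix w j)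

/-- Pure eventuality formulae: μ ::= Fφ | μ∨μ | μ∧μ | Xμ | φUμ | μRμ | Gμ. -/
inductive PureEventuality {AP : Type} : LTL AP → Prop
  | fin (φ : LTL AP) : PureEventuality (LTL.F φ)
  | or {μ₁ μ₂ : LTL AP} : PureEventuality μ₁ → PureEventuality μ₂ →
      PureEventuality (LTL.or μ₁ μ₂)
  | and {μ₁ μ₂ : LTL AP} : PureEventuality μ₁ → PureEventuality μ₂ →
      PureEventuality (LTL.and μ₁ μ₂)
  | next {μ : LTL AP} : PureEventuality μ → PureEventuality (LTL.next μ)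
  | untl (φ : LTL AP) {μ : LTL AP} : PureEventuality μ →
      PureEventuality (LTL.untl φ μ)
  | rel {μ₁ μ₂ : LTL AP} : PureEventuality μ₁ → PureEventuality μ₂ →
      PureEventuality (LTL.R μ₁ μ₂)
  | glob {μ : LTL AP} : PureEventuality μ → PureEventuality (LTL.G μ)

/-- Pure universality formulae: ν ::= Gφ | ν∨ν | ν∧ν | Xν | νUν | φRν | Fν. -/
inductive PureUniversality {AP : Type} : LTL AP → Prop
  | glob (φ : LTL AP) : PureUniversality (LTL.G φ)
  | or {ν₁ ν₂ : LTL AP} : PureUniversality ν₁ → PureUniversality ν₂ →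
      PureUniversality (LTL.or ν₁ ν₂)
  | and {ν₁ ν₂ : LTL AP} : PureUniversality ν₁ → PureUniversality ν₂ →
      PureUniversality (LTL.and ν₁ ν₂)
  | next {ν : LTL AP} : PureUniversality ν → PureUniversality (LTL.next ν)
  | untl {ν₁ ν₂ : LTL AP} : PureUniversality ν₁ → PureUniversality ν₂ →
      PureUniversality (LTL.untl ν₁ ν₂)
  | rel (φ : LTL AP) {ν : LTL AP} : PureUniversality ν →
      PureUniversality (LTL.R φ ν)
  | fin {ν : LTL AP} : PureUniversality ν → PureUniversality (LTL.F ν)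

/-- Alternating formulae: ξ ::= Gμ | Fν | ξ∨ξ | ξ∧ξ | Xξ | φUξ | φRξ | Fξ | Gξ. -/
inductive Alternating {AP : Type} : LTL AP → Prop
  | globEv {μ : LTL AP} : PureEventuality μ → Alternating (LTL.G μ)
  | finUniv {ν : LTL AP} : PureUniversality ν → Alternating (LTL.F ν)
  | or {ξ₁ ξ₂ : LTL AP} : Alternating ξ₁ → Alternating ξ₂ →
      Alternating (LTL.or ξ₁ ξ₂)
  | and {ξ₁ ξ₂ : LTL AP} : Alternating ξ₁ → Alternating ξ₂ →
      Alternating (LTL.and ξ₁ ξ₂)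
  | next {ξ : LTL AP} : Alternating ξ → Alternating (LTL.next ξ)
  | untl (φ : LTL AP) {ξ : LTL AP} : Alternating ξ → Alternating (LTL.untl φ ξ)
  | rel (φ : LTL AP) {ξ : LTL AP} : Alternating ξ → Alternating (LTL.R φ ξ)
  | fin {ξ : LTL AP} : Alternating ξ → Alternating (LTL.F ξ)
  | glob {ξ : LTL AP} : Alternating ξ → Alternating (LTL.G ξ)

section Aux

variable {AP : Type}

lemma suffix_cat (u : List (Set AP)) (w : ℕ → Set AP) (k : ℕ) :
    suffix (cat u w) (k + u.length) = suffix w k := by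
  funext i
  simp only [suffix, cat]
  rw [dif_neg (by omega)]
  have h' : i + (k + u.length) - u.length = i + k := by omega
  rw [h']

lemma suffix_cat' (u : List (Set AP)) (w : ℕ → Set AP) (i : ℕ) (h : u.length ≤ i) :
    suffix (cat u w) i = suffix w (i - u.length) := by
  have := suffix_cat u w (i - u.length)
  rwa [Nat.sub_add_cancel h] at this

lemma suffix_cat_drop (u : List (Set AP)) (w : ℕ → Set AP) (i : ℕ) (h : i ≤ u.length) :
    suffix (cat u w) i = cat (u.drop i) w := by
  funext j
  simp only [suffix, cat, List.length_drop, List.get_eq_getElem]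
  by_cases hj : j + i < u.length
  · rw [dif_pos hj, dif_pos (by omega), List.getElem_drop]
    congr 1
    omega
  · rw [dif_neg hj, dif_neg (by omega)]
    have h' : j + i - u.length = j - (u.length - i) := by omega
    rw [h']

lemma cat_cat (u v : List (Set AP)) (w : ℕ → Set AP) :
    cat u (cat v w) = cat (u ++ v) w := by
  funext i
  simp only [cat, List.length_append, List.get_eq_getElem]
  by_cases h1 : i < u.length
  · rw [dif_pos h1, dif_pos (by omega), List.getElem_append_left h1]
  · rw [dif_neg h1]
    by_cases h2 : i - u.length < v.length
    · rw [dif_pos h2, dif_pos (by omega), List.getElem_append_right (by omega)]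
    · rw [dif_neg h2, dif_neg (by omega)]
      have h' : i - u.length - v.length = i - (u.length + v.length) := by omega
      rw [h']

lemma cat_prefix (w : ℕ → Set AP) (i : ℕ) :
    cat (List.ofFn (fun j : Fin i => w j)) (suffix w i) = w := by
  funext k
  simp only [cat, suffix, List.length_ofFn, List.get_eq_getElem]
  by_cases h : k < i
  · rw [dif_pos h, List.getElem_ofFn]
  · rw [dif_neg h]
    rw [Nat.sub_add_cancel (by omega)]

lemma suffix_zero (w : ℕ → Set AP) : suffix w 0 = w := rfl

end Aux

theorem pure_eventuality_left_append_closed :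
    ∀ (AP : Type) (μ : LTL AP), PureEventuality μ →
      ∀ (u : List (Set AP)) (w : ℕ → Set AP), Sat μ w → Sat μ (cat u w) := by
  intro AP μ hμ
  induction hμ with
  | fin φ =>
    intro u w h
    obtain ⟨i, hi, -⟩ := h
    exact ⟨i + u.length, by rw [suffix_cat]; exact hi, fun j _ => trivial⟩
  | or h1 h2 ih1 ih2 =>
    intro u w h
    rcases h with h | h
    · exact Or.inl (ih1 u w h)
    · exact Or.inr (ih2 u w h)
  | and h1 h2 ih1 ih2 =>
    intro u w h
    exact ⟨ih1 u w h.1, ih2 u w h.2⟩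
  | next h ih =>
    intro u w h'
    show Sat _ (suffix (cat u w) 1)
    rcases u with _ | ⟨a, t⟩
    · rw [suffix_cat' [] w 1 (by simp)]
      exact h'
    · rw [suffix_cat_drop (a :: t) w 1 (by simp)]
      simp only [List.drop_succ_cons, List.drop_zero]
      have : cat t w = cat (t ++ List.ofFn (fun j : Fin 1 => w j)) (suffix w 1) := by
        rw [← cat_cat, cat_prefix]
      rw [this]
      exact ih _ _ h'
  | untl φ h ih =>
    intro u w h'
    obtain ⟨i, hi, -⟩ := h'
    refine ⟨0, ?_, fun j hj => absurd hj (Nat.not_lt_zero j)⟩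
    rw [suffix_zero]
    have : cat u w = cat (u ++ List.ofFn (fun j : Fin i => w j)) (suffix w i) := by
      rw [← cat_cat, cat_prefix]
    rw [this]
    exact ih _ _ hi
  | @rel μ₁ μ₂ h1 h2 ih1 ih2 =>
    intro u w h
    simp only [LTL.R, Sat] at h ⊢
    intro hcon
    obtain ⟨i, hi2, hi1⟩ := hcon
    have hw : ∀ k, ¬ Sat μ₂ (suffix w k) → ∃ j, j < k ∧ Sat μ₁ (suffix w j) := by
      intro k hk
      by_contra hcon2
      push_neg at hcon2
      exact h ⟨k, hk, fun j hj => hcon2 j hj⟩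
    by_cases hle : u.length ≤ i
    · rw [suffix_cat' u w i hle] at hi2
      obtain ⟨j, hj, hsj⟩ := hw _ hi2
      have heq : suffix w j = suffix (cat u w) (j + u.length) := (suffix_cat u w j).symm
      rw [heq] at hsj
      exact hi1 (j + u.length) (by omega) hsj
    · have h0 : Sat μ₂ w := by
        by_contra hc
        obtain ⟨j, hj, -⟩ := hw 0 (by rwa [suffix_zero])
        omega
      rw [suffix_cat_drop u w i (by omega)] at hi2
      exact hi2 (ih2 _ _ h0)
  | @glob μ₀ h ih =>
    intro u w hG
    simp only [LTL.G, LTL.F, Sat] at hG ⊢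
    intro hcon
    obtain ⟨i, hi, -⟩ := hcon
    have hall : ∀ k, Sat μ₀ (suffix w k) := by
      intro k
      by_contra hk
      exact hG ⟨k, hk, fun _ _ => trivial⟩
    by_cases hle : u.length ≤ i
    · rw [suffix_cat' u w i hle] at hi
      exact hi (hall _)
    · rw [suffix_cat_drop u w i (by omega)] at hi
      exact hi (ih _ _ (by simpa [suffix_zero] using hall 0))
end

section
/- For every alternating LTL formula ξ, every finite word u ∈ Σ* and every infinite word w ∈ Σ^ω: uw ⊨ ξ if and only if w ⊨ ξ (alternating formulae define prefix-invariant languages). -/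
section Helpers

variable {AP : Type}

lemma cat_nil (w : ℕ → Set AP) : cat [] w = w := by
  funext i; simp [cat]

lemma cat_cons (a : Set AP) (u : List (Set AP)) (w : ℕ → Set AP) :
    cat (a :: u) w = cat [a] (cat u w) := by
  funext i
  simp only [cat, List.length_cons, List.length_singleton]
  rcases i with _ | i
  · simp
  · by_cases h : i < u.length
    · simp [Nat.succ_lt_succ h, h]
    · have h1 : ¬ (i + 1 < u.length + 1) := by omega
      have h2 : ¬ (i + 1 < 1) := by omega
      simp [h1, h2, h]

lemma suffix_cons_succ (a : Set AP) (w : ℕ → Set AP) (k : ℕ) :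
    suffix (cat [a] w) (k + 1) = suffix w k := by
  funext i
  simp only [suffix, cat, List.length_singleton]
  have h : ¬ (i + (k + 1) < 1) := by omega
  simp [h]

lemma head_suffix (w : ℕ → Set AP) : cat [w 0] (suffix w 1) = w := by
  funext i
  rcases i with _ | i
  · simp [cat]
  · have h : ¬ (i + 1 < ([w 0] : List (Set AP)).length) := by simp
    simp [cat, suffix]

lemma suffix_suffix (w : ℕ → Set AP) (k : ℕ) :
    suffix (suffix w 1) k = suffix w (k + 1) := by
  funext i
  simp only [suffix]
  ring_nf

lemma sat_F (φ : LTL AP) (w : ℕ → Set AP) :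
    Sat (LTL.F φ) w ↔ ∃ i, Sat φ (suffix w i) := by
  simp [LTL.F, Sat]

lemma sat_G (φ : LTL AP) (w : ℕ → Set AP) :
    Sat (LTL.G φ) w ↔ ∀ i, Sat φ (suffix w i) := by
  simp [LTL.G, LTL.F, Sat]

lemma sat_R (φ ψ : LTL AP) (w : ℕ → Set AP) :
    Sat (LTL.R φ ψ) w ↔ ∀ i, Sat ψ (suffix w i) ∨ ∃ j < i, Sat φ (suffix w j) := by
  simp only [LTL.R, Sat]
  push_neg
  constructor <;> intro h i <;> have hi := h i <;> tauto

/-- Lift satisfaction of a formula from a suffix to the whole word,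
given closure under adding one letter. -/
lemma lift_of_cons {μ : LTL AP}
    (h : ∀ (a : Set AP) (w : ℕ → Set AP), Sat μ w → Sat μ (cat [a] w)) :
    ∀ (k : ℕ) (v : ℕ → Set AP), Sat μ (suffix v k) → Sat μ v := by
  intro k
  induction k with
  | zero => intro v hv; rwa [suffix_zero] at hv
  | succ k ih =>
    intro v hv
    rw [← suffix_suffix] at hv
    have h1 : Sat μ (suffix v 1) := ih _ hv
    have h2 := h (v 0) (suffix v 1) h1
    rwa [head_suffix] at h2

/-- Push satisfaction of a formula from the whole word to a suffix,
given closure under removing one letter. -/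
lemma drop_of_cons {ν : LTL AP}
    (h : ∀ (a : Set AP) (w : ℕ → Set AP), Sat ν (cat [a] w) → Sat ν w) :
    ∀ (k : ℕ) (v : ℕ → Set AP), Sat ν v → Sat ν (suffix v k) := by
  intro k
  induction k with
  | zero => intro v hv; rwa [suffix_zero]
  | succ k ih =>
    intro v hv
    rw [← suffix_suffix]
    apply ih
    apply h (v 0)
    rwa [head_suffix]

lemma pe_cons {μ : LTL AP} (hμ : PureEventuality μ) :
    ∀ (a : Set AP) (w : ℕ → Set AP), Sat μ w → Sat μ (cat [a] w) := by
  induction hμ with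
  | fin φ =>
    intro a w h
    rw [sat_F] at h ⊢
    obtain ⟨i, hi⟩ := h
    exact ⟨i + 1, by rwa [suffix_cons_succ]⟩
  | or h1 h2 ih1 ih2 =>
    intro a w h
    rcases h with h | h
    · exact Or.inl (ih1 a w h)
    · exact Or.inr (ih2 a w h)
  | and h1 h2 ih1 ih2 =>
    intro a w h
    exact ⟨ih1 a w h.1, ih2 a w h.2⟩
  | next h ih =>
    intro a w hw
    show Sat _ (suffix (cat [a] w) 1)
    have h0 : suffix (cat [a] w) 1 = w := by
      have := suffix_cons_succ a w 0
      rwa [suffix_zero] at this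
    rw [h0]
    exact lift_of_cons ih 1 w hw
  | untl φ h ih =>
    intro a w hw
    obtain ⟨i, hi, -⟩ := hw
    have h1 : Sat _ w := lift_of_cons ih i w hi
    refine ⟨0, ?_, ?_⟩
    · rw [suffix_zero]; exact ih a w h1
    · intro j hj; omega
  | rel h1 h2 ih1 ih2 =>
    intro a w hw
    rw [sat_R] at hw ⊢
    intro i
    rcases i with _ | k
    · rcases hw 0 with hv | ⟨j, hj, -⟩
      · rw [suffix_zero] at hv
        left; rw [suffix_zero]; exact ih2 a w hv
      · omega
    · rcases hw k with hv | ⟨j, hj, hφ⟩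
      · left; rwa [suffix_cons_succ]
      · right; exact ⟨j + 1, by omega, by rwa [suffix_cons_succ]⟩
  | glob h ih =>
    intro a w hw
    rw [sat_G] at hw ⊢
    intro i
    rcases i with _ | k
    · rw [suffix_zero]
      have := hw 0; rw [suffix_zero] at this
      exact ih a w this
    · rw [suffix_cons_succ]; exact hw k

lemma pu_cons {ν : LTL AP} (hν : PureUniversality ν) :
    ∀ (a : Set AP) (w : ℕ → Set AP), Sat ν (cat [a] w) → Sat ν w := by
  induction hν with
  | glob φ =>
    intro a w h
    rw [sat_G] at h ⊢
    intro i
    have := h (i + 1)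
    rwa [suffix_cons_succ] at this
  | or h1 h2 ih1 ih2 =>
    intro a w h
    rcases h with h | h
    · exact Or.inl (ih1 a w h)
    · exact Or.inr (ih2 a w h)
  | and h1 h2 ih1 ih2 =>
    intro a w h
    exact ⟨ih1 a w h.1, ih2 a w h.2⟩
  | next h ih =>
    intro a w hw
    have hw' : Sat _ (suffix (cat [a] w) 1) := hw
    have h0 : suffix (cat [a] w) 1 = w := by
      have := suffix_cons_succ a w 0
      rwa [suffix_zero] at this
    rw [h0] at hw'
    show Sat _ (suffix w 1)
    exact drop_of_cons ih 1 w hw'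
  | untl h1 h2 ih1 ih2 =>
    intro a w hw
    obtain ⟨i, hi, hj⟩ := hw
    rcases i with _ | k
    · rw [suffix_zero] at hi
      exact ⟨0, by rw [suffix_zero]; exact ih2 a w hi, by intro j hj'; omega⟩
    · refine ⟨k, by rwa [suffix_cons_succ] at hi, ?_⟩
      intro j hj'
      have := hj (j + 1) (by omega)
      rwa [suffix_cons_succ] at this
  | rel φ h ih =>
    intro a w hw
    rw [sat_R] at hw ⊢
    rcases hw 0 with hv | ⟨j, hj, -⟩
    · rw [suffix_zero] at hv
      have hν := ih a w hv
      intro i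
      left
      exact drop_of_cons ih i w hν
    · omega
  | fin h ih =>
    intro a w hw
    rw [sat_F] at hw ⊢
    obtain ⟨i, hi⟩ := hw
    rcases i with _ | k
    · rw [suffix_zero] at hi
      exact ⟨0, by rw [suffix_zero]; exact ih a w hi⟩
    · rw [suffix_cons_succ] at hi
      exact ⟨k, hi⟩

/-- Suffix invariance from single-letter invariance. -/
lemma suffix_iff_of_cons {ξ : LTL AP}
    (h : ∀ (a : Set AP) (w : ℕ → Set AP), Sat ξ (cat [a] w) ↔ Sat ξ w) :
    ∀ (k : ℕ) (v : ℕ → Set AP), Sat ξ (suffix v k) ↔ Sat ξ v := by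
  intro k
  induction k with
  | zero => intro v; rw [suffix_zero]
  | succ k ih =>
    intro v
    rw [← suffix_suffix, ih]
    calc Sat ξ (suffix v 1) ↔ Sat ξ (cat [v 0] (suffix v 1)) := (h _ _).symm
      _ ↔ Sat ξ v := by rw [head_suffix]

lemma alt_cons {ξ : LTL AP} (hξ : Alternating ξ) :
    ∀ (a : Set AP) (w : ℕ → Set AP), Sat ξ (cat [a] w) ↔ Sat ξ w := by
  induction hξ with
  | globEv h =>
    intro a w
    rw [sat_G, sat_G]
    constructor
    · intro hw i
      have := hw (i + 1)
      rwa [suffix_cons_succ] at this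
    · intro hw i
      rcases i with _ | k
      · rw [suffix_zero]
        have := hw 0; rw [suffix_zero] at this
        exact pe_cons h a w this
      · rw [suffix_cons_succ]; exact hw k
  | finUniv h =>
    intro a w
    rw [sat_F, sat_F]
    constructor
    · rintro ⟨i, hi⟩
      rcases i with _ | k
      · rw [suffix_zero] at hi
        exact ⟨0, by rw [suffix_zero]; exact pu_cons h a w hi⟩
      · rw [suffix_cons_succ] at hi
        exact ⟨k, hi⟩
    · rintro ⟨i, hi⟩
      exact ⟨i + 1, by rwa [suffix_cons_succ]⟩
  | or h1 h2 ih1 ih2 =>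
    intro a w
    exact or_congr (ih1 a w) (ih2 a w)
  | and h1 h2 ih1 ih2 =>
    intro a w
    exact and_congr (ih1 a w) (ih2 a w)
  | next h ih =>
    intro a w
    show Sat _ (suffix (cat [a] w) 1) ↔ Sat _ (suffix w 1)
    have h0 : suffix (cat [a] w) 1 = w := by
      have := suffix_cons_succ a w 0
      rwa [suffix_zero] at this
    rw [h0]
    exact (suffix_iff_of_cons ih 1 w).symm
  | untl φ h ih =>
    rename_i ξ'
    intro a w
    have key : ∀ v : ℕ → Set AP, Sat (LTL.untl φ ξ') v ↔ Sat ξ' v := by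
      intro v
      constructor
      · rintro ⟨i, hi, -⟩
        exact (suffix_iff_of_cons ih i v).mp hi
      · intro hv
        exact ⟨0, by rwa [suffix_zero], by intro j hj; omega⟩
    rw [key, key]
    exact ih a w
  | rel φ h ih =>
    rename_i ξ'
    intro a w
    have key : ∀ v : ℕ → Set AP, Sat (LTL.R φ ξ') v ↔ Sat ξ' v := by
      intro v
      rw [sat_R]
      constructor
      · intro hv
        rcases hv 0 with h0 | ⟨j, hj, -⟩
        · rwa [suffix_zero] at h0
        · omega
      · intro hv i
        left
        exact (suffix_iff_of_cons ih i v).mpr hv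
    rw [key, key]
    exact ih a w
  | fin h ih =>
    rename_i ξ'
    intro a w
    have key : ∀ v : ℕ → Set AP, Sat (LTL.F ξ') v ↔ Sat ξ' v := by
      intro v
      rw [sat_F]
      constructor
      · rintro ⟨i, hi⟩
        exact (suffix_iff_of_cons ih i v).mp hi
      · intro hv
        exact ⟨0, by rwa [suffix_zero]⟩
    rw [key, key]
    exact ih a w
  | glob h ih =>
    rename_i ξ'
    intro a w
    have key : ∀ v : ℕ → Set AP, Sat (LTL.G ξ') v ↔ Sat ξ' v := by
      intro v
      rw [sat_G]
      constructor
      · intro hv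
        have := hv 0; rwa [suffix_zero] at this
      · intro hv i
        exact (suffix_iff_of_cons ih i v).mpr hv
    rw [key, key]
    exact ih a w

end Helpers

theorem alternating_prefix_invariant :
    ∀ (AP : Type) (ξ : LTL AP), Alternating ξ →
      ∀ (u : List (Set AP)) (w : ℕ → Set AP), Sat ξ (cat u w) ↔ Sat ξ w := by
  intro AP ξ hξ u
  induction u with
  | nil => intro w; rw [cat_nil]
  | cons a u ih =>
    intro w
    rw [cat_cons, alt_cons hξ, ih]
end

section
/- Let φ and ψ be LTL formulae such that φ implies ψ (for every alphabet Σ and every w ∈ Σ^ω, w ⊨ φ implies w ⊨ ψ), and let γ be an alternating LTL formula. Then ψ U (φ U γ) ≡ ψ U γ, i.e., for every alphabet Σ and every infinite word w ∈ Σ^ω, w ⊨ ψ U (φ U γ) if and only if w ⊨ ψ U γ. -/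
theorem until_until_alternating_equiv :
    ∀ (AP : Type) (φ ψ : LTL AP),
      (∀ w : ℕ → Set AP, Sat φ w → Sat ψ w) →
      ∀ (γ : LTL AP), Alternating γ →
        ∀ (w : ℕ → Set AP),
          Sat (LTL.untl ψ (LTL.untl φ γ)) w ↔ Sat (LTL.untl ψ γ) w := by
  intro AP φ ψ himp γ _ w
  have hsuf : ∀ (w : ℕ → Set AP) (i k : ℕ), suffix (suffix w i) k = suffix w (k + i) := by
    intro w i k; funext j; simp [suffix]; ring_nf
  constructor
  · rintro ⟨i, ⟨k, hγ, hφ⟩, hψ⟩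
    refine ⟨k + i, by rwa [hsuf] at hγ, ?_⟩
    intro j hj
    rcases lt_or_ge j i with h | h
    · exact hψ j h
    · have : Sat φ (suffix (suffix w i) (j - i)) := hφ (j - i) (by omega)
      rw [hsuf] at this
      have hji : j - i + i = j := by omega
      rw [hji] at this
      exact himp _ this
  · rintro ⟨i, hγ, hψ⟩
    exact ⟨i, ⟨0, by rwa [hsuf, Nat.zero_add], by omega⟩, hψ⟩
end
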